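/- arXiv:0902.4324 — 5 statements merged into one kernel-verified Lean document; each statement's English description precedes it below -/
import Mathlib

section
/- Let T > 0 and let φ : [0,T]² → ℝ be a measurable symmetric kernel satisfying condition (C_R) with exponent p ∈ (1,∞) and constant C > 0, and assume φ is positive semidefinite in the integral sense. Let (H,⟨·,·⟩_H) be a separable real Hilbert space. Then for every f ∈ L^p([0,T];H): ∫_0^T ∫_0^T ⟨f(u), f(v)⟩_H φ(u,v) du dv ≥ 0 (the double integral being absolutely convergent). -/
open MeasureTheory Set Filter Function TopologicalSpace
open scoped RealInnerProductSpace InnerProductSpace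

/-!
Condition (C_R) applied to the scalar function `‖f‖` makes `‖f u‖ ‖f v‖ |φ u v|` integrable on
the square, which dominates everything below. Expanding `⟪f u, f v⟫ = ∑ᵢ ⟪f u, eᵢ⟫ ⟪f v, eᵢ⟫` in a
Hilbert basis, each term is the quadratic form of the scalar `L^p` function `⟪f, eᵢ⟫`, hence
nonnegative, and by Bessel and Cauchy–Schwarz every partial sum is bounded by `‖f u‖ ‖f v‖`.
Separability makes the basis countable, so dominated convergence along the partial sums applies.
-/

theorem Orthonormal.countable {𝕜 E ι : Type*} [RCLike 𝕜] [NormedAddCommGroup E]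
    [InnerProductSpace 𝕜 E] [SeparableSpace E] {v : ι → E} (hv : Orthonormal 𝕜 v) :
    Countable ι := by
  refine Pairwise.countable_of_isOpen_disjoint (s := fun i => Metric.ball (v i) (1 / 2))
    (fun i j hij => Metric.ball_disjoint_ball ?_) (fun _ => Metric.isOpen_ball)
    (fun _ => Metric.nonempty_ball.2 one_half_pos)
  have hsq : ‖v i - v j‖ ^ 2 = 2 := by
    rw [@norm_sub_sq 𝕜, hv.norm_eq_one, hv.norm_eq_one, hv.inner_eq_zero hij]
    norm_num
  rw [dist_eq_norm]
  nlinarith [norm_nonneg (v i - v j)]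

theorem Orthonormal.norm_sum_inner_mul_inner_le {𝕜 E ι : Type*} [RCLike 𝕜]
    [NormedAddCommGroup E] [InnerProductSpace 𝕜 E] {v : ι → E} (hv : Orthonormal 𝕜 v)
    (s : Finset ι) (x y : E) :
    ‖∑ i ∈ s, ⟪x, v i⟫_𝕜 * ⟪v i, y⟫_𝕜‖ ≤ ‖x‖ * ‖y‖ := by
  have bessel : ∀ z : E, √(∑ i ∈ s, ‖⟪v i, z⟫_𝕜‖ ^ 2) ≤ ‖z‖ := fun z =>
    (Real.sqrt_le_left (norm_nonneg z)).2 (hv.sum_inner_products_le z)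
  calc ‖∑ i ∈ s, ⟪x, v i⟫_𝕜 * ⟪v i, y⟫_𝕜‖
      ≤ ∑ i ∈ s, ‖⟪v i, x⟫_𝕜‖ * ‖⟪v i, y⟫_𝕜‖ := by
        refine (norm_sum_le _ _).trans_eq (Finset.sum_congr rfl fun i _ => ?_)
        rw [norm_mul, norm_inner_symm]
    _ ≤ √(∑ i ∈ s, ‖⟪v i, x⟫_𝕜‖ ^ 2) * √(∑ i ∈ s, ‖⟪v i, y⟫_𝕜‖ ^ 2) :=
        Real.sum_mul_le_sqrt_mul_sqrt _ _ _
    _ ≤ ‖x‖ * ‖y‖ := by gcongr <;> exact bessel _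

theorem integrable_prod_of_lintegral_lintegral_lt_top {α β : Type*} [MeasurableSpace α]
    [MeasurableSpace β] {μ : Measure α} {ν : Measure β} [SFinite ν] {F : α × β → ℝ}
    (hF : AEStronglyMeasurable F (μ.prod ν))
    (h : ∫⁻ u, ∫⁻ v, ENNReal.ofReal |F (u, v)| ∂ν ∂μ < ⊤) : Integrable F (μ.prod ν) := by
  refine ⟨hF, hasFiniteIntegral_iff_enorm.2 ?_⟩
  simp_rw [Real.enorm_eq_ofReal_abs]
  rwa [lintegral_prod _ hF.aemeasurable.abs.ennreal_ofReal]

section Kernel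

variable {α E : Type*} [MeasurableSpace α] {μ : Measure α} [NormedAddCommGroup E] {f : α → E}
  {φ : α → α → ℝ}

theorem aestronglyMeasurable_kernel_comp {B : E → E → ℝ} (hB : Continuous (uncurry B))
    (hf : AEStronglyMeasurable f μ) (hφ : AEStronglyMeasurable (uncurry φ) (μ.prod μ)) :
    AEStronglyMeasurable (fun q : α × α => B (f q.1) (f q.2) * φ q.1 q.2) (μ.prod μ) :=
  (hB.comp_aestronglyMeasurable (hf.comp_fst.prodMk hf.comp_snd)).mul hφ

theorem norm_kernel_comp_le {B : E → E → ℝ} {c : ℝ} (hBc : ∀ x y, |B x y| ≤ c * (‖x‖ * ‖y‖))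
    (x y : E) (r : ℝ) : ‖B x y * r‖ ≤ c * ‖‖x‖ * ‖y‖ * r‖ := by
  rw [norm_mul, norm_mul, norm_mul, norm_norm, norm_norm, Real.norm_eq_abs, ← mul_assoc c]
  exact mul_le_mul_of_nonneg_right (hBc x y) (norm_nonneg r)

theorem integrable_kernel_comp {B : E → E → ℝ} (hB : Continuous (uncurry B)) {c : ℝ}
    (hBc : ∀ x y, |B x y| ≤ c * (‖x‖ * ‖y‖)) (hf : AEStronglyMeasurable f μ)
    (hφ : AEStronglyMeasurable (uncurry φ) (μ.prod μ))
    (hdom : Integrable (fun q : α × α => ‖f q.1‖ * ‖f q.2‖ * φ q.1 q.2) (μ.prod μ)) :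
    Integrable (fun q : α × α => B (f q.1) (f q.2) * φ q.1 q.2) (μ.prod μ) :=
  (hdom.norm.const_mul c).mono' (aestronglyMeasurable_kernel_comp hB hf hφ)
    (ae_of_all _ fun _ => norm_kernel_comp_le hBc _ _ _)

theorem integral_inner_mul_kernel_nonneg {H : Type*} [NormedAddCommGroup H]
    [InnerProductSpace ℝ H] [CompleteSpace H] [SeparableSpace H] {f : α → H}
    (hf : AEStronglyMeasurable f μ) (hφ : AEStronglyMeasurable (uncurry φ) (μ.prod μ))
    (hdom : Integrable (fun q : α × α => ‖f q.1‖ * ‖f q.2‖ * φ q.1 q.2) (μ.prod μ))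
    (hpos : ∀ x : H, 0 ≤ ∫ q, ⟪f q.1, x⟫ * ⟪f q.2, x⟫ * φ q.1 q.2 ∂μ.prod μ) :
    0 ≤ ∫ q, ⟪f q.1, f q.2⟫ * φ q.1 q.2 ∂μ.prod μ := by
  obtain ⟨w, b, -⟩ := exists_hilbertBasis ℝ H
  have := b.orthonormal.countable
  set P : Finset w → H → H → ℝ := fun s x y => ∑ i ∈ s, ⟪x, b i⟫ * ⟪b i, y⟫
  have hP : ∀ s x y, |P s x y| ≤ 1 * (‖x‖ * ‖y‖) := fun s x y => by
    simpa using b.orthonormal.norm_sum_inner_mul_inner_le s x y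
  have hP_cont : ∀ s, Continuous (uncurry (P s)) := fun s => by
    simp only [P]
    fun_prop
  have hP_int : ∀ s, Integrable (fun q : α × α => P s (f q.1) (f q.2) * φ q.1 q.2) (μ.prod μ) :=
    fun s => integrable_kernel_comp (hP_cont s) (hP s) hf hφ hdom
  have hP_nonneg : ∀ s, 0 ≤ ∫ q, P s (f q.1) (f q.2) * φ q.1 q.2 ∂μ.prod μ := by
    intro s
    simp only [P, Finset.sum_mul]
    rw [integral_finsetSum s fun i _ => by simpa [P] using hP_int {i}]
    refine Finset.sum_nonneg fun i _ => ?_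
    simpa only [real_inner_comm (b i)] using hpos (b i)
  have hlim : Tendsto (fun s => ∫ q, P s (f q.1) (f q.2) * φ q.1 q.2 ∂μ.prod μ) atTop
      (nhds (∫ q, ⟪f q.1, f q.2⟫ * φ q.1 q.2 ∂μ.prod μ)) := by
    refine tendsto_integral_filter_of_dominated_convergence _
      (Eventually.of_forall fun s => (hP_int s).aestronglyMeasurable)
      (Eventually.of_forall fun s => ae_of_all _ fun _ => norm_kernel_comp_le (hP s) _ _ _)
      (hdom.norm.const_mul 1) (ae_of_all _ fun _ => ?_)
    exact (b.hasSum_inner_mul_inner _ _).mul_const _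
  exact ge_of_tendsto' hlim hP_nonneg

end Kernel

theorem stmt_5_general
    {H : Type*} [NormedAddCommGroup H] [InnerProductSpace ℝ H] [CompleteSpace H]
    [SecondCountableTopology H]
    (T : ℝ) (φ : ℝ → ℝ → ℝ) (hφmeas : Measurable (Function.uncurry φ))
    (p : ℝ) (C : ℝ)
    (hCR : ∀ f : ℝ → ℝ, MemLp f (ENNReal.ofReal p) (volume.restrict (Set.Icc 0 T)) →
      ∫⁻ u in Set.Icc (0 : ℝ) T, ∫⁻ v in Set.Icc (0 : ℝ) T,
          ENNReal.ofReal |f u * f v * φ u v|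
        ≤ ENNReal.ofReal
            (C * ((∫ u in Set.Icc (0 : ℝ) T, |f u| ^ p) ^ (1 / p)) ^ 2))
    (hpos : ∀ f : ℝ → ℝ, MemLp f (ENNReal.ofReal p) (volume.restrict (Set.Icc 0 T)) →
      0 ≤ ∫ u in Set.Icc (0 : ℝ) T, ∫ v in Set.Icc (0 : ℝ) T, f u * f v * φ u v)
    (f : ℝ → H)
    (hf : MemLp f (ENNReal.ofReal p) (volume.restrict (Set.Icc 0 T))) :
    IntegrableOn (fun q : ℝ × ℝ => ⟪f q.1, f q.2⟫ * φ q.1 q.2)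
        (Set.Icc (0 : ℝ) T ×ˢ Set.Icc (0 : ℝ) T) volume ∧
      0 ≤ ∫ u in Set.Icc (0 : ℝ) T, ∫ v in Set.Icc (0 : ℝ) T, ⟪f u, f v⟫ * φ u v := by
  set μ := volume.restrict (Icc (0 : ℝ) T)
  have hμ : volume.restrict (Icc (0 : ℝ) T ×ˢ Icc 0 T) = μ.prod μ := by
    rw [Measure.volume_eq_prod, Measure.prod_restrict]
  have hfm := hf.aestronglyMeasurable
  have hφm : AEStronglyMeasurable (uncurry φ) (μ.prod μ) := hφmeas.aestronglyMeasurable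
  have hdom : Integrable (fun q : ℝ × ℝ => ‖f q.1‖ * ‖f q.2‖ * φ q.1 q.2) (μ.prod μ) :=
    integrable_prod_of_lintegral_lintegral_lt_top
      (aestronglyMeasurable_kernel_comp (B := fun x y => ‖x‖ * ‖y‖) (by fun_prop) hfm hφm)
      ((hCR _ hf.norm).trans_lt ENNReal.ofReal_lt_top)
  have hint := integrable_kernel_comp (B := fun x y : H => ⟪x, y⟫) continuous_inner (c := 1)
    (fun x y => by simpa using abs_real_inner_le_norm x y) hfm hφm hdom
  refine ⟨by rwa [IntegrableOn, hμ], ?_⟩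
  rw [← integral_prod _ hint]
  refine integral_inner_mul_kernel_nonneg hfm hφm hdom fun x => ?_
  have hx : ∀ y z : H, |⟪y, x⟫ * ⟪z, x⟫| ≤ ‖x‖ ^ 2 * (‖y‖ * ‖z‖) := fun y z => by
    calc |⟪y, x⟫ * ⟪z, x⟫| ≤ ‖y‖ * ‖x‖ * (‖z‖ * ‖x‖) := by
          rw [abs_mul]; gcongr <;> exact abs_real_inner_le_norm _ _
      _ = ‖x‖ ^ 2 * (‖y‖ * ‖z‖) := by ring
  rw [integral_prod _ (integrable_kernel_comp (B := fun y z : H => ⟪y, x⟫ * ⟪z, x⟫)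
    (by fun_prop) hx hfm hφm hdom)]
  exact hpos _ (hf.inner_const x)

/-- If the measurable symmetric kernel `φ` on `[0,T]²` satisfies
condition `(C_R)` with exponent `p ∈ (1,∞)` and constant `C > 0` and is positive
semidefinite in the integral sense, and `H` is a separable real Hilbert space, then
for every `f ∈ L^p([0,T];H)` the double integral `∫_0^T ∫_0^T ⟨f(u), f(v)⟩_H φ(u,v) du dv`
is absolutely convergent and nonnegative. -/
theorem stmt_5
    {H : Type*} [NormedAddCommGroup H] [InnerProductSpace ℝ H] [CompleteSpace H]
    [SecondCountableTopology H]
    (T : ℝ) (hT : 0 < T) (φ : ℝ → ℝ → ℝ) (hφmeas : Measurable (Function.uncurry φ))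
    (hφsymm : ∀ u v, φ u v = φ v u)
    (p : ℝ) (hp : 1 < p) (C : ℝ) (hC : 0 < C)
    (hCR : ∀ f : ℝ → ℝ, MemLp f (ENNReal.ofReal p) (volume.restrict (Set.Icc 0 T)) →
      ∫⁻ u in Set.Icc (0 : ℝ) T, ∫⁻ v in Set.Icc (0 : ℝ) T,
          ENNReal.ofReal |f u * f v * φ u v|
        ≤ ENNReal.ofReal
            (C * ((∫ u in Set.Icc (0 : ℝ) T, |f u| ^ p) ^ (1 / p)) ^ 2))
    (hpos : ∀ f : ℝ → ℝ, MemLp f (ENNReal.ofReal p) (volume.restrict (Set.Icc 0 T)) →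
      0 ≤ ∫ u in Set.Icc (0 : ℝ) T, ∫ v in Set.Icc (0 : ℝ) T, f u * f v * φ u v)
    (f : ℝ → H)
    (hf : MemLp f (ENNReal.ofReal p) (volume.restrict (Set.Icc 0 T))) :
    IntegrableOn (fun q : ℝ × ℝ => ⟪f q.1, f q.2⟫ * φ q.1 q.2)
        (Set.Icc (0 : ℝ) T ×ˢ Set.Icc (0 : ℝ) T) volume ∧
      0 ≤ ∫ u in Set.Icc (0 : ℝ) T, ∫ v in Set.Icc (0 : ℝ) T, ⟪f u, f v⟫ * φ u v :=
  stmt_5_general T φ hφmeas p C hCR hpos f hf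
end

section
/- Let T > 0 and let φ : [0,T]² → ℝ be a measurable symmetric kernel satisfying condition (C_R) with exponent p ∈ (1,∞) and constant C > 0. Let (H,⟨·,·⟩_H) be a separable real Hilbert space, ε > 0 and f ∈ L^{p+ε}([0,T];H). Then for all 0 ≤ s ≤ t ≤ T: ∫_s^t ∫_s^t |⟨f(u), f(v)⟩_H φ(u,v)| du dv ≤ C (t−s)^{2ε/(p(p+ε))} ‖f‖_{L^{p+ε}([0,T];H)}^2. -/
open MeasureTheory Set
open scoped RealInnerProductSpace

/-!
By Cauchy–Schwarz, `|⟪f u, f v⟫| ≤ g u * g v` on `[s,t]²` with `g = 1_{[s,t]} ‖f‖`, so `(C_R)`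
applied to `g` bounds the double integral by `C ‖g‖_p²`. Hölder's inequality on `[s,t]` gives
`‖g‖_p ≤ ‖f‖_{p+ε} (t - s)^(1/p - 1/(p+ε))`, and `2 (1/p - 1/(p+ε)) = 2ε/(p(p+ε))`.
-/

theorem abs_inner_mul_le_abs_norm_mul_norm_mul {H : Type*} [NormedAddCommGroup H]
    [InnerProductSpace ℝ H] (x y : H) (c : ℝ) : |⟪x, y⟫ * c| ≤ |‖x‖ * ‖y‖ * c| := by
  rw [abs_mul, abs_mul, abs_mul, abs_norm, abs_norm]
  exact mul_le_mul_of_nonneg_right (abs_real_inner_le_norm x y) (abs_nonneg c)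

section

variable {α : Type*} [MeasurableSpace α] {μ : Measure α} {S A : Set α}

theorem lintegral_abs_inner_mul_le_indicator_norm {H : Type*} [NormedAddCommGroup H]
    [InnerProductSpace ℝ H] (hS : MeasurableSet S) (hSA : S ⊆ A) (f : α → H)
    (φ : α → α → ℝ) :
    ∫⁻ u in S, ∫⁻ v in S, ENNReal.ofReal |⟪f u, f v⟫ * φ u v| ∂μ ∂μ
      ≤ ∫⁻ u in A, ∫⁻ v in A,
          ENNReal.ofReal |S.indicator (‖f ·‖) u * S.indicator (‖f ·‖) v * φ u v| ∂μ ∂μ :=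
  calc ∫⁻ u in S, ∫⁻ v in S, ENNReal.ofReal |⟪f u, f v⟫ * φ u v| ∂μ ∂μ
      ≤ ∫⁻ u in S, ∫⁻ v in S,
          ENNReal.ofReal |S.indicator (‖f ·‖) u * S.indicator (‖f ·‖) v * φ u v| ∂μ ∂μ :=
        setLIntegral_mono' hS fun u hu ↦ setLIntegral_mono' hS fun v hv ↦ by
          rw [indicator_of_mem hu, indicator_of_mem hv]
          exact ENNReal.ofReal_le_ofReal (abs_inner_mul_le_abs_norm_mul_norm_mul _ _ _)
    _ ≤ _ := (lintegral_mono fun _ ↦ lintegral_mono_set hSA).trans (lintegral_mono_set hSA)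

theorem eLpNorm_restrict_le_eLpNorm_restrict_mul_rpow_measure {E : Type*}
    [NormedAddCommGroup E] (hSA : S ⊆ A) {f : α → E} {p q : ENNReal} (hpq : p ≤ q)
    (hf : AEStronglyMeasurable f (μ.restrict A)) :
    eLpNorm f p (μ.restrict S)
      ≤ eLpNorm f q (μ.restrict A) * μ S ^ (1 / p.toReal - 1 / q.toReal) := by
  have hμ : μ.restrict S ≤ μ.restrict A := Measure.restrict_mono hSA le_rfl
  refine (eLpNorm_le_eLpNorm_mul_rpow_measure_univ hpq (hf.mono_measure hμ)).trans ?_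
  rw [Measure.restrict_apply_univ]
  gcongr

theorem MeasureTheory.MemLp.indicator_norm_of_le {E : Type*} [NormedAddCommGroup E]
    [IsFiniteMeasure (μ.restrict A)] (hS : MeasurableSet S) {f : α → E} {p q : ℝ} (hpq : p ≤ q)
    (hf : MemLp f (ENNReal.ofReal q) (μ.restrict A)) :
    MemLp (S.indicator (‖f ·‖)) (ENNReal.ofReal p) (μ.restrict A) :=
  (hf.norm.indicator hS).mono_exponent (ENNReal.ofReal_le_ofReal hpq)

theorem integral_rpow_abs_indicator_norm_le {E : Type*} [NormedAddCommGroup E]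
    [IsFiniteMeasure (μ.restrict A)] (hS : MeasurableSet S) (hSA : S ⊆ A) {f : α → E}
    {p q : ℝ} (hp : 0 < p) (hpq : p ≤ q) (hf : MemLp f (ENNReal.ofReal q) (μ.restrict A)) :
    (∫ x in A, |S.indicator (‖f ·‖) x| ^ p ∂μ) ^ (1 / p)
      ≤ (∫ x in A, ‖f x‖ ^ q ∂μ) ^ (1 / q) * μ.real S ^ (1 / p - 1 / q) := by
  have hq : 0 < q := hp.trans_le hpq
  have hg := hf.indicator_norm_of_le hS hpq
  have hHolder := eLpNorm_restrict_le_eLpNorm_restrict_mul_rpow_measure hSA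
    (ENNReal.ofReal_le_ofReal hpq) hf.1
  have hμS : μ.restrict S = (μ.restrict A).restrict S := by
    rw [Measure.restrict_restrict hS, inter_eq_left.2 hSA]
  have hSfin : μ S ≠ ⊤ := by
    simpa [Measure.restrict_apply hS, inter_eq_left.2 hSA] using
      measure_ne_top (μ.restrict A) S
  rw [← eLpNorm_norm, hμS, ← eLpNorm_indicator_eq_eLpNorm_restrict hS,
    hg.eLpNorm_eq_integral_rpow_norm (by simpa using hp) ENNReal.ofReal_ne_top,
    hf.eLpNorm_eq_integral_rpow_norm (by simpa using hq) ENNReal.ofReal_ne_top,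
    ← ofReal_measureReal hSfin] at hHolder
  simp only [ENNReal.toReal_ofReal hp.le, ENNReal.toReal_ofReal hq.le, Real.norm_eq_abs] at hHolder
  rw [ENNReal.ofReal_rpow_of_nonneg measureReal_nonneg
      (sub_nonneg.2 (one_div_le_one_div_of_le hp hpq)), ← ENNReal.ofReal_mul (by positivity),
    ENNReal.ofReal_le_ofReal_iff (by positivity)] at hHolder
  simpa only [one_div] using hHolder

end

theorem stmt_10_general
    {H : Type*} [NormedAddCommGroup H] [InnerProductSpace ℝ H]
    (T : ℝ) (φ : ℝ → ℝ → ℝ)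
    (p : ℝ) (hp : 1 < p) (C : ℝ) (hC : 0 < C)
    (hCR : ∀ f : ℝ → ℝ, MemLp f (ENNReal.ofReal p) (volume.restrict (Set.Icc 0 T)) →
      ∫⁻ u in Set.Icc (0 : ℝ) T, ∫⁻ v in Set.Icc (0 : ℝ) T,
          ENNReal.ofReal |f u * f v * φ u v|
        ≤ ENNReal.ofReal
            (C * ((∫ u in Set.Icc (0 : ℝ) T, |f u| ^ p) ^ (1 / p)) ^ 2))
    (ε : ℝ) (hε : 0 < ε) (f : ℝ → H)
    (hf : MemLp f (ENNReal.ofReal (p + ε)) (volume.restrict (Set.Icc 0 T)))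
    (s t : ℝ) (hs : 0 ≤ s) (hst : s ≤ t) (ht : t ≤ T) :
    ∫⁻ u in Set.Icc s t, ∫⁻ v in Set.Icc s t, ENNReal.ofReal |⟪f u, f v⟫ * φ u v|
      ≤ ENNReal.ofReal
          (C * (t - s) ^ (2 * ε / (p * (p + ε))) *
            ((∫ u in Set.Icc (0 : ℝ) T, ‖f u‖ ^ (p + ε)) ^ (1 / (p + ε))) ^ 2) := by
  have hp0 : 0 < p := by linarith
  have hsub : Icc s t ⊆ Icc 0 T := Icc_subset_Icc hs ht
  have hpε : p ≤ p + ε := le_add_of_nonneg_right hε.le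
  have hnorm := integral_rpow_abs_indicator_norm_le measurableSet_Icc hsub hp0 hpε hf
  rw [Real.volume_real_Icc_of_le hst] at hnorm
  have hexp : 2 * ε / (p * (p + ε)) = (1 / p - 1 / (p + ε)) * 2 := by
    field_simp
    ring
  calc _ ≤ _ := lintegral_abs_inner_mul_le_indicator_norm measurableSet_Icc hsub f φ
    _ ≤ _ := hCR _ (hf.indicator_norm_of_le measurableSet_Icc hpε)
    _ ≤ _ := by
      refine ENNReal.ofReal_le_ofReal ?_
      rw [hexp, Real.rpow_mul (sub_nonneg.2 hst), Real.rpow_two]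
      calc _ ≤ C * ((∫ u in Icc (0 : ℝ) T, ‖f u‖ ^ (p + ε)) ^ (1 / (p + ε)) *
              (t - s) ^ (1 / p - 1 / (p + ε))) ^ 2 := by gcongr
        _ = _ := by ring

/-- If the measurable symmetric kernel `φ` satisfies `(C_R)` with
exponent `p ∈ (1,∞)` and constant `C > 0`, `H` is a separable real Hilbert space,
`ε > 0` and `f ∈ L^{p+ε}([0,T];H)`, then for all `0 ≤ s ≤ t ≤ T`:
`∫_s^t ∫_s^t |⟨f(u),f(v)⟩_H φ(u,v)| du dv
  ≤ C (t-s)^{2ε/(p(p+ε))} ‖f‖_{L^{p+ε}([0,T];H)}²`. -/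
theorem stmt_10
    {H : Type*} [NormedAddCommGroup H] [InnerProductSpace ℝ H] [CompleteSpace H]
    [SecondCountableTopology H]
    (T : ℝ) (hT : 0 < T) (φ : ℝ → ℝ → ℝ) (hφmeas : Measurable (Function.uncurry φ))
    (hφsymm : ∀ u v, φ u v = φ v u)
    (p : ℝ) (hp : 1 < p) (C : ℝ) (hC : 0 < C)
    (hCR : ∀ f : ℝ → ℝ, MemLp f (ENNReal.ofReal p) (volume.restrict (Set.Icc 0 T)) →
      ∫⁻ u in Set.Icc (0 : ℝ) T, ∫⁻ v in Set.Icc (0 : ℝ) T,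
          ENNReal.ofReal |f u * f v * φ u v|
        ≤ ENNReal.ofReal
            (C * ((∫ u in Set.Icc (0 : ℝ) T, |f u| ^ p) ^ (1 / p)) ^ 2))
    (ε : ℝ) (hε : 0 < ε) (f : ℝ → H)
    (hf : MemLp f (ENNReal.ofReal (p + ε)) (volume.restrict (Set.Icc 0 T)))
    (s t : ℝ) (hs : 0 ≤ s) (hst : s ≤ t) (ht : t ≤ T) :
    ∫⁻ u in Set.Icc s t, ∫⁻ v in Set.Icc s t, ENNReal.ofReal |⟪f u, f v⟫ * φ u v|
      ≤ ENNReal.ofReal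
          (C * (t - s) ^ (2 * ε / (p * (p + ε))) *
            ((∫ u in Set.Icc (0 : ℝ) T, ‖f u‖ ^ (p + ε)) ^ (1 / (p + ε))) ^ 2) :=
  stmt_10_general T φ p hp C hC hCR ε hε f hf s t hs hst ht
end

section
/- Let T > 0, let φ : [0,T]² → ℝ be a measurable symmetric kernel satisfying condition (C_R) with exponent p ∈ (1,∞) and constant C > 0, let (U,⟨·,·⟩_U) and (H,⟨·,·⟩_H) be separable real Hilbert spaces, (e_n) an orthonormal basis of U, and (λ_n) nonnegative reals with ∑_n √λ_n < ∞. For each n let I_n : L^p([0,T];H) → L²(Ω;H) be a linear map satisfying, for all f, h ∈ L^p([0,T];H) and all x, y ∈ H: E[⟨I_n f, x⟩_H ⟨I_m h, y⟩_H] = δ_{nm} ∫_0^T ∫_0^T ⟨f(s), x⟩_H ⟨h(s'), y⟩_H φ(s,s') ds ds' and E⟨I_n f, I_n h⟩_H = ∫_0^T ∫_0^T ⟨f(s), h(s')⟩_H φ(s,s') ds ds'. Then for every h_1, h_2 ∈ L^p([0,T];L(U,H)) the series J(h_i) := ∑_n √λ_n I_n(h_i(·)e_n) converges in L²(Ω;H),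 and for all x, y ∈ H: E[⟨J(h_1), x⟩_H ⟨J(h_2), y⟩_H] = ∫_0^T ∫_0^T ⟨h_2(s') Q h_1(s)^* x, y⟩_H φ(s,s') ds ds', where Q z := ∑_n λ_n ⟨z, e_n⟩_U e_n. -/
/-!
Put `b = ‖h₁‖ + ‖h₂‖ ∈ L^p`. Condition `(C_R)` applied to `b` makes `b(u) b(v) φ(u,v)` integrable
on `[0,T]²`, and this one kernel dominates everything. It bounds `‖I_n(h_i(·)e_n)‖²` uniformly in
`n`, so `∑ √λ_n < ∞` makes `J(h_i)` converge absolutely in `L²`. It also dominates the series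
`∑ λ_n ⟨h₁(u)e_n, x⟩⟨h₂(v)e_n, y⟩ φ(u,v) = ⟨h₂(v) Q h₁(u)^* x, y⟩ φ(u,v)`, so summation and double
integration commute. On the probabilistic side, `(X, Y) ↦ E[⟨X,x⟩⟨Y,y⟩]` is a continuous bilinear
form on `L²` and the `I_n` are uncorrelated, so the double series for `E[⟨J(h₁),x⟩⟨J(h₂),y⟩]`
collapses to its diagonal `∑ λ_n E[⟨I_n(h₁(·)e_n),x⟩⟨I_n(h₂(·)e_n),y⟩]`.
-/

open MeasureTheory Set
open scoped RealInnerProductSpace ENNReal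

section IteratedIntegral

variable {α β E : Type*} [MeasurableSpace α] [MeasurableSpace β] {μ : Measure α} {ν : Measure β}
  [NormedAddCommGroup E]

theorem integrable_prod_of_lintegral_lintegral_ne_top [SFinite ν] {f : α × β → E}
    (hf : AEStronglyMeasurable f (μ.prod ν)) (h : ∫⁻ u, ∫⁻ v, ‖f (u, v)‖ₑ ∂ν ∂μ ≠ ∞) :
    Integrable f (μ.prod ν) :=
  ⟨hf, by rw [HasFiniteIntegral, lintegral_prod _ hf.enorm]; exact h.lt_top⟩

variable [NormedSpace ℝ E] [SFinite μ] [SFinite ν]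

theorem norm_integral_integral_le_of_norm_le {G : α → β → E} {B : α × β → ℝ}
    (hB : Integrable B (μ.prod ν)) (hG : AEStronglyMeasurable (Function.uncurry G) (μ.prod ν))
    (hGB : ∀ᵐ z ∂μ.prod ν, ‖G z.1 z.2‖ ≤ B z) :
    ‖∫ u, ∫ v, G u v ∂ν ∂μ‖ ≤ ∫ z, B z ∂μ.prod ν := by
  calc ‖∫ u, ∫ v, G u v ∂ν ∂μ‖ = ‖∫ z, Function.uncurry G z ∂μ.prod ν‖ := by
        rw [integral_prod _ (hB.mono' hG hGB)]; rfl
    _ ≤ ∫ z, B z ∂μ.prod ν := norm_integral_le_of_norm_le hB hGB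

theorem hasSum_integral_integral_of_dominated {ι : Type*} [Countable ι] {G : ι → α → β → E}
    {S : α → β → E} {w : ι → ℝ} {B : α × β → ℝ} (hw : Summable w) (hB : Integrable B (μ.prod ν))
    (hG : ∀ n, AEStronglyMeasurable (Function.uncurry (G n)) (μ.prod ν))
    (hGB : ∀ n, ∀ᵐ z ∂μ.prod ν, ‖G n z.1 z.2‖ ≤ w n * B z)
    (hS : ∀ u v, HasSum (fun n => G n u v) (S u v)) :
    HasSum (fun n => ∫ u, ∫ v, G n u v ∂ν ∂μ) (∫ u, ∫ v, S u v ∂ν ∂μ) := by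
  have hS_meas : AEStronglyMeasurable (Function.uncurry S) (μ.prod ν) :=
    aestronglyMeasurable_of_tendsto_ae Filter.atTop
      (fun s => Finset.aestronglyMeasurable_fun_sum s fun n _ => hG n)
      (ae_of_all _ fun z => hS z.1 z.2)
  have hSB : ∀ᵐ z ∂μ.prod ν, ‖Function.uncurry S z‖ ≤ (∑' n, w n) * B z := by
    filter_upwards [ae_all_iff.2 hGB] with z hz
    exact (hS z.1 z.2).norm_le_of_bounded (hw.hasSum.mul_right (B z)) hz
  have hB' : Integrable (fun z => ∑' n, w n * B z) (μ.prod ν) := by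
    simpa only [tsum_mul_right] using hB.const_mul (∑' n, w n)
  have key := hasSum_integral_of_dominated_convergence (fun n z => w n * B z) hG hGB
    (ae_of_all _ fun z => hw.mul_right (B z)) hB' (ae_of_all _ fun z => hS z.1 z.2)
  convert key using 1
  · ext n
    exact (integral_prod _ ((hB.const_mul (w n)).mono' (hG n) (hGB n))).symm
  · exact (integral_prod _ ((hB.const_mul _).mono' hS_meas hSB)).symm

end IteratedIntegral

theorem ContinuousLinearMap.hasSum_of_orthogonal {ι 𝕜 E F G : Type*} [DecidableEq ι]
    [NontriviallyNormedField 𝕜] [NormedAddCommGroup E] [NormedAddCommGroup F]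
    [NormedAddCommGroup G] [NormedSpace 𝕜 E] [NormedSpace 𝕜 F] [NormedSpace 𝕜 G]
    (L : E →L[𝕜] F →L[𝕜] G) {x : ι → E} {y : ι → F} {a : E} {b : F} {c : ι → G}
    (hx : HasSum x a) (hy : HasSum y b) (hxy : ∀ i j, L (x i) (y j) = if i = j then c i else 0) :
    HasSum c (L a b) := by
  have hrow : ∀ i, L (x i) b = c i := fun i =>
    ((L (x i)).hasSum hy).unique (by simpa only [hxy, eq_comm] using hasSum_ite_eq i (c i))
  simpa only [ContinuousLinearMap.flip_apply, hrow] using (L.flip b).hasSum hx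

theorem hasSum_inner_apply_mul_inner_apply {ι U H : Type*}
    [NormedAddCommGroup U] [InnerProductSpace ℝ U] [CompleteSpace U]
    [NormedAddCommGroup H] [InnerProductSpace ℝ H] [CompleteSpace H]
    {e : ι → U} {l : ι → ℝ} {Q : U →L[ℝ] U}
    (hQ : ∀ z : U, HasSum (fun n => (l n * ⟪z, e n⟫) • e n) (Q z)) (A B : U →L[ℝ] H) (x y : H) :
    HasSum (fun n => l n * ⟪A (e n), x⟫ * ⟪B (e n), y⟫)
      ⟪B (Q (ContinuousLinearMap.adjoint A x)), y⟫ := by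
  have h := ((innerSL ℝ y).comp B).hasSum (hQ (ContinuousLinearMap.adjoint A x))
  simp only [ContinuousLinearMap.comp_apply, map_smul, innerSL_apply_apply, smul_eq_mul,
    ContinuousLinearMap.adjoint_inner_left] at h
  simpa only [real_inner_comm x, real_inner_comm y] using h

section Covariance

variable {Ω H : Type*} [MeasurableSpace Ω] [NormedAddCommGroup H] [InnerProductSpace ℝ H]

noncomputable def covarianceForm (P : Measure Ω) (x y : H) : Lp H 2 P →L[ℝ] Lp H 2 P →L[ℝ] ℝ :=
  (innerSL ℝ).bilinearComp ((innerSL ℝ x).compLpL 2 P) ((innerSL ℝ y).compLpL 2 P)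

theorem covarianceForm_apply (P : Measure Ω) (x y : H) (X Y : Lp H 2 P) :
    covarianceForm P x y X Y = ∫ ω, ⟪X ω, x⟫ * ⟪Y ω, y⟫ ∂P := by
  rw [covarianceForm, ContinuousLinearMap.bilinearComp_apply, innerSL_apply_apply, L2.inner_def]
  refine integral_congr_ae ?_
  filter_upwards [(innerSL ℝ x).coeFn_compLpL X, (innerSL ℝ y).coeFn_compLpL Y] with ω hX hY
  simp only [hX, hY, innerSL_apply_apply, real_inner_comm x, real_inner_comm y,
    RCLike.inner_apply, conj_trivial, mul_comm]

theorem hasSum_integral_inner_mul_inner_of_uncorrelated {ι : Type*} [DecidableEq ι]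
    {P : Measure Ω} (x y : H) {X₁ X₂ : ι → Lp H 2 P} {c : ι → ℝ} {J₁ J₂ : Lp H 2 P}
    (h₁ : HasSum (fun n => c n • X₁ n) J₁) (h₂ : HasSum (fun n => c n • X₂ n) J₂)
    {E : ι → ι → ℝ}
    (hX : ∀ n m, ∫ ω, ⟪X₁ n ω, x⟫ * ⟪X₂ m ω, y⟫ ∂P = (if n = m then 1 else 0) * E n m) :
    HasSum (fun n => c n ^ 2 * E n n) (∫ ω, ⟪J₁ ω, x⟫ * ⟪J₂ ω, y⟫ ∂P) := by
  rw [← covarianceForm_apply]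
  refine (covarianceForm P x y).hasSum_of_orthogonal h₁ h₂ fun n m => ?_
  rw [map_smul, map_smul, smul_apply, covarianceForm_apply, hX, smul_eq_mul, smul_eq_mul]
  split_ifs with h
  · subst h
    ring
  · ring

end Covariance

theorem Summable.of_sqrt {ι : Type*} {l : ι → ℝ} (hl : ∀ n, 0 ≤ l n)
    (h : Summable fun n => √(l n)) : Summable l := by
  refine Summable.of_nonneg_of_le hl (fun n => ?_) (h.mul_left (∑' n, √(l n)))
  calc l n = √(l n) * √(l n) := (Real.mul_self_sqrt (hl n)).symm
    _ ≤ (∑' n, √(l n)) * √(l n) := by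
      gcongr
      exact h.le_tsum n fun _ _ => Real.sqrt_nonneg _

theorem abs_inner_apply_le_of_norm_le_one {U H : Type*} [NormedAddCommGroup U]
    [InnerProductSpace ℝ U] [NormedAddCommGroup H] [InnerProductSpace ℝ H]
    (A : U →L[ℝ] H) {u : U} (hu : ‖u‖ ≤ 1) (x : H) : |⟪A u, x⟫| ≤ ‖A‖ * ‖x‖ :=
  (abs_real_inner_le_norm _ _).trans (by gcongr; exact A.unit_le_opNorm u hu)

theorem ae_norm_le_of_ae_eq_apply {α U H : Type*} [MeasurableSpace α] {μ : Measure α}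
    [NormedAddCommGroup U] [NormedSpace ℝ U] [NormedAddCommGroup H] [NormedSpace ℝ H]
    {f : α → H} {h : α → U →L[ℝ] H} {b : α → ℝ} {u₀ : U} (hu₀ : ‖u₀‖ ≤ 1)
    (hb : ∀ s, ‖h s‖ ≤ b s) (hf : f =ᵐ[μ] fun s => h s u₀) : ∀ᵐ s ∂μ, ‖f s‖ ≤ b s := by
  filter_upwards [hf] with s hs
  rw [hs]
  exact ((h s).unit_le_opNorm u₀ hu₀).trans (hb s)

section Kernel

variable {α H : Type*} [MeasurableSpace α] {μ : Measure α} [SFinite μ]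
  [NormedAddCommGroup H] [InnerProductSpace ℝ H] {φ : α → α → ℝ} {b : α → ℝ}

theorem integral_integral_inner_mul_le (hφ : Measurable (Function.uncurry φ))
    (hK : Integrable (fun z : α × α => b z.1 * b z.2 * φ z.1 z.2) (μ.prod μ)) {f : α → H}
    (hf : AEStronglyMeasurable f μ) (hfb : ∀ᵐ u ∂μ, ‖f u‖ ≤ b u) :
    ∫ u, ∫ v, ⟪f u, f v⟫ * φ u v ∂μ ∂μ ≤ ∫ z, ‖b z.1 * b z.2 * φ z.1 z.2‖ ∂μ.prod μ := by
  refine (le_abs_self _).trans (norm_integral_integral_le_of_norm_le hK.norm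
    (G := fun u v => ⟪f u, f v⟫ * φ u v)
    ((hf.comp_fst.inner hf.comp_snd).mul hφ.aestronglyMeasurable) ?_)
  filter_upwards [Measure.quasiMeasurePreserving_fst.ae hfb,
    Measure.quasiMeasurePreserving_snd.ae hfb] with z h₁ h₂
  simp only [norm_mul, Real.norm_eq_abs]
  gcongr
  exact (abs_real_inner_le_norm _ _).trans (mul_le_mul (h₁.trans (le_abs_self _))
    (h₂.trans (le_abs_self _)) (norm_nonneg _) (abs_nonneg _))

theorem summable_smul_of_integral_inner_self_eq {ι Ω : Type*} [MeasurableSpace Ω]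
    {P : Measure Ω} [CompleteSpace H] (hφ : Measurable (Function.uncurry φ))
    (hK : Integrable (fun z : α × α => b z.1 * b z.2 * φ z.1 z.2) (μ.prod μ))
    {c : ι → ℝ} (hc : Summable c) {X : ι → Lp H 2 P} {f : ι → α → H}
    (hf : ∀ n, AEStronglyMeasurable (f n) μ) (hfb : ∀ n, ∀ᵐ u ∂μ, ‖f n u‖ ≤ b u)
    (hX : ∀ n, ∫ ω, ⟪X n ω, X n ω⟫ ∂P = ∫ u, ∫ v, ⟪f n u, f n v⟫ * φ u v ∂μ ∂μ) :
    Summable fun n => c n • X n := by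
  set K := ∫ z, ‖b z.1 * b z.2 * φ z.1 z.2‖ ∂μ.prod μ
  have hXK : ∀ n, ‖X n‖ ≤ √K := fun n => Real.le_sqrt_of_sq_le <| by
    rw [← real_inner_self_eq_norm_sq, L2.inner_def, hX n]
    exact integral_integral_inner_mul_le hφ hK (hf n) (hfb n)
  refine Summable.of_norm_bounded (hc.norm.mul_right √K) fun n => ?_
  rw [norm_smul]
  gcongr
  exact hXK n

theorem hasSum_mul_integral_integral_inner_mul_inner {ι U : Type*} [Countable ι]
    [NormedAddCommGroup U] [InnerProductSpace ℝ U] [CompleteSpace U] [CompleteSpace H]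
    (hφ : Measurable (Function.uncurry φ))
    (hK : Integrable (fun z : α × α => b z.1 * b z.2 * φ z.1 z.2) (μ.prod μ))
    {h₁ h₂ : α → U →L[ℝ] H} (hh₁ : AEStronglyMeasurable h₁ μ) (hh₂ : AEStronglyMeasurable h₂ μ)
    (hb₁ : ∀ u, ‖h₁ u‖ ≤ b u) (hb₂ : ∀ u, ‖h₂ u‖ ≤ b u) {e : ι → U} (he : ∀ n, ‖e n‖ ≤ 1)
    {l : ι → ℝ} (hl : Summable l) {Q : U →L[ℝ] U}
    (hQ : ∀ z : U, HasSum (fun n => (l n * ⟪z, e n⟫) • e n) (Q z)) (x y : H) :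
    HasSum (fun n => l n * ∫ u, ∫ v, ⟪h₁ u (e n), x⟫ * ⟪h₂ v (e n), y⟫ * φ u v ∂μ ∂μ)
      (∫ u, ∫ v, ⟪h₂ v (Q (ContinuousLinearMap.adjoint (h₁ u) x)), y⟫ * φ u v ∂μ ∂μ) := by
  have hcoord : ∀ {h : α → U →L[ℝ] H}, AEStronglyMeasurable h μ → ∀ n (z : H),
      AEStronglyMeasurable (fun u => ⟪h u (e n), z⟫) μ := fun hh n z =>
    ((ContinuousLinearMap.apply ℝ H (e n)).continuous.comp_aestronglyMeasurable hh).inner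
      aestronglyMeasurable_const
  have hbound : ∀ n u v, ‖l n * ⟪h₁ u (e n), x⟫ * ⟪h₂ v (e n), y⟫ * φ u v‖
      ≤ ‖l n‖ * (‖x‖ * ‖y‖) * ‖b u * b v * φ u v‖ := fun n u v => by
    have ha : |⟪h₁ u (e n), x⟫| ≤ |b u| * ‖x‖ :=
      (abs_inner_apply_le_of_norm_le_one (h₁ u) (he n) x).trans
        (by gcongr; exact (hb₁ u).trans (le_abs_self _))
    have hb : |⟪h₂ v (e n), y⟫| ≤ |b v| * ‖y‖ :=
      (abs_inner_apply_le_of_norm_le_one (h₂ v) (he n) y).trans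
        (by gcongr; exact (hb₂ v).trans (le_abs_self _))
    simp only [norm_mul, Real.norm_eq_abs]
    calc _ ≤ |l n| * (|b u| * ‖x‖) * (|b v| * ‖y‖) * |φ u v| := by gcongr
      _ = _ := by ring
  have hsum := hasSum_integral_integral_of_dominated (hl.norm.mul_right (‖x‖ * ‖y‖)) hK.norm
    (G := fun n u v => l n * ⟪h₁ u (e n), x⟫ * ⟪h₂ v (e n), y⟫ * φ u v)
    (fun n => ((((hcoord hh₁ n x).comp_fst).const_mul _).mul (hcoord hh₂ n y).comp_snd).mul
      hφ.aestronglyMeasurable)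
    (fun n => ae_of_all _ fun z => hbound n z.1 z.2)
    (fun u v => (hasSum_inner_apply_mul_inner_apply hQ (h₁ u) (h₂ v) x y).mul_right (φ u v))
  simpa only [mul_assoc, integral_const_mul] using hsum

end Kernel

theorem stmt_15_general
    {U : Type*} [NormedAddCommGroup U] [InnerProductSpace ℝ U] [CompleteSpace U]
    {H : Type*} [NormedAddCommGroup H] [InnerProductSpace ℝ H] [CompleteSpace H]
    {Ω : Type*} [MeasurableSpace Ω] (P : Measure Ω)
    (T : ℝ) (φ : ℝ → ℝ → ℝ) (hφmeas : Measurable (Function.uncurry φ))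
    (p : ℝ) (C : ℝ)
    (hCR : ∀ f : ℝ → ℝ, MemLp f (ENNReal.ofReal p) (volume.restrict (Set.Icc 0 T)) →
      ∫⁻ u in Set.Icc (0 : ℝ) T, ∫⁻ v in Set.Icc (0 : ℝ) T,
          ENNReal.ofReal |f u * f v * φ u v|
        ≤ ENNReal.ofReal
            (C * ((∫ u in Set.Icc (0 : ℝ) T, |f u| ^ p) ^ (1 / p)) ^ 2))
    (e : HilbertBasis ℕ ℝ U)
    (l : ℕ → ℝ) (hl : ∀ n, 0 ≤ l n) (hsum : Summable (fun n => Real.sqrt (l n)))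
    (Q : U →L[ℝ] U) (hQ : ∀ z : U, HasSum (fun n => (l n * ⟪z, e n⟫) • (e n : U)) (Q z))
    (I : ℕ → (Lp H (ENNReal.ofReal p) (volume.restrict (Set.Icc (0 : ℝ) T)) →ₗ[ℝ] Lp H 2 P))
    (hI1 : ∀ (n m : ℕ)
      (f h : Lp H (ENNReal.ofReal p) (volume.restrict (Set.Icc (0 : ℝ) T))) (x y : H),
      ∫ ω, ⟪(I n f) ω, x⟫ * ⟪(I m h) ω, y⟫ ∂P
        = (if n = m then (1 : ℝ) else 0) *
            ∫ u in Set.Icc (0 : ℝ) T, ∫ v in Set.Icc (0 : ℝ) T,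
              ⟪f u, x⟫ * ⟪h v, y⟫ * φ u v)
    (hI2 : ∀ (n : ℕ)
      (f h : Lp H (ENNReal.ofReal p) (volume.restrict (Set.Icc (0 : ℝ) T))),
      ∫ ω, ⟪(I n f) ω, (I n h) ω⟫ ∂P
        = ∫ u in Set.Icc (0 : ℝ) T, ∫ v in Set.Icc (0 : ℝ) T, ⟪f u, h v⟫ * φ u v)
    (h₁ h₂ : ℝ → (U →L[ℝ] H))
    (hh₁ : MemLp h₁ (ENNReal.ofReal p) (volume.restrict (Set.Icc (0 : ℝ) T)))
    (hh₂ : MemLp h₂ (ENNReal.ofReal p) (volume.restrict (Set.Icc (0 : ℝ) T)))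
    (F₁ F₂ : ℕ → Lp H (ENNReal.ofReal p) (volume.restrict (Set.Icc (0 : ℝ) T)))
    (hF₁ : ∀ n, (F₁ n : ℝ → H) =ᵐ[volume.restrict (Set.Icc (0 : ℝ) T)] fun s => h₁ s (e n))
    (hF₂ : ∀ n, (F₂ n : ℝ → H) =ᵐ[volume.restrict (Set.Icc (0 : ℝ) T)] fun s => h₂ s (e n)) :
    ∃ J₁ J₂ : Lp H 2 P,
      HasSum (fun n => Real.sqrt (l n) • I n (F₁ n)) J₁ ∧
      HasSum (fun n => Real.sqrt (l n) • I n (F₂ n)) J₂ ∧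
      ∀ x y : H,
        ∫ ω, ⟪J₁ ω, x⟫ * ⟪J₂ ω, y⟫ ∂P
          = ∫ u in Set.Icc (0 : ℝ) T, ∫ v in Set.Icc (0 : ℝ) T,
              ⟪h₂ v (Q (ContinuousLinearMap.adjoint (h₁ u) x)), y⟫ * φ u v := by
  set b : ℝ → ℝ := fun u => ‖h₁ u‖ + ‖h₂ u‖
  have hb : MemLp b (ENNReal.ofReal p) (volume.restrict (Set.Icc 0 T)) := hh₁.norm.add hh₂.norm
  have hK : Integrable (fun z : ℝ × ℝ => b z.1 * b z.2 * φ z.1 z.2)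
      ((volume.restrict (Set.Icc 0 T)).prod (volume.restrict (Set.Icc 0 T))) :=
    integrable_prod_of_lintegral_lintegral_ne_top
      ((hb.aestronglyMeasurable.comp_fst.mul hb.aestronglyMeasurable.comp_snd).mul
        hφmeas.aestronglyMeasurable) (by
        simpa only [Real.enorm_eq_ofReal_abs] using
          ne_top_of_le_ne_top ENNReal.ofReal_ne_top (hCR b hb))
  have hb₁ : ∀ u, ‖h₁ u‖ ≤ b u := fun u => le_add_of_nonneg_right (norm_nonneg _)
  have hb₂ : ∀ u, ‖h₂ u‖ ≤ b u := fun u => le_add_of_nonneg_left (norm_nonneg _)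
  have he : ∀ n, ‖(e n : U)‖ ≤ 1 := fun n => (e.orthonormal.1 n).le
  obtain ⟨J₁, hJ₁⟩ := summable_smul_of_integral_inner_self_eq hφmeas hK hsum
    (fun n => Lp.aestronglyMeasurable (F₁ n))
    (fun n => ae_norm_le_of_ae_eq_apply (he n) hb₁ (hF₁ n)) fun n => hI2 n (F₁ n) (F₁ n)
  obtain ⟨J₂, hJ₂⟩ := summable_smul_of_integral_inner_self_eq hφmeas hK hsum
    (fun n => Lp.aestronglyMeasurable (F₂ n))
    (fun n => ae_norm_le_of_ae_eq_apply (he n) hb₂ (hF₂ n)) fun n => hI2 n (F₂ n) (F₂ n)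
  refine ⟨J₁, J₂, hJ₁, hJ₂, fun x y => ?_⟩
  refine (hasSum_integral_inner_mul_inner_of_uncorrelated x y hJ₁ hJ₂
    fun n m => hI1 n m (F₁ n) (F₂ m) x y).unique ?_
  convert hasSum_mul_integral_integral_inner_mul_inner hφmeas hK hh₁.aestronglyMeasurable
    hh₂.aestronglyMeasurable hb₁ hb₂ he (.of_sqrt hl hsum) hQ x y using 2 with n
  rw [Real.sq_sqrt (hl n)]
  congr 1
  refine integral_congr_ae ((hF₁ n).mono fun u hu => ?_)
  refine integral_congr_ae ((hF₂ n).mono fun v hv => ?_)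
  simp only [hu, hv]

/-- Given component integrals `I_n : L^p([0,T];H) → L²(Ω;H)` which are
pairwise uncorrelated copies of the stochastic integral w.r.t. a kernel `φ` satisfying
`(C_R)`, and weights `λ_n ≥ 0` with `∑ √λ_n < ∞`, for `h₁, h₂ ∈ L^p([0,T];L(U,H))` the
series `J(h_i) = ∑_n √λ_n I_n(h_i(·)e_n)` converge in `L²(Ω;H)` and for all `x, y ∈ H`:
`E[⟨J(h₁),x⟩⟨J(h₂),y⟩] = ∫_0^T ∫_0^T ⟨h₂(s') Q h₁(s)^* x, y⟩ φ(s,s') ds ds'`,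
where `Q z = ∑_n λ_n ⟨z,e_n⟩ e_n`. -/
theorem stmt_15
    {U : Type*} [NormedAddCommGroup U] [InnerProductSpace ℝ U] [CompleteSpace U]
    [SecondCountableTopology U]
    {H : Type*} [NormedAddCommGroup H] [InnerProductSpace ℝ H] [CompleteSpace H]
    [SecondCountableTopology H]
    {Ω : Type*} [MeasurableSpace Ω] (P : Measure Ω) [IsProbabilityMeasure P]
    (T : ℝ) (hT : 0 < T) (φ : ℝ → ℝ → ℝ) (hφmeas : Measurable (Function.uncurry φ))
    (hφsymm : ∀ u v, φ u v = φ v u)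
    (p : ℝ) (hp : 1 < p) [Fact (1 ≤ ENNReal.ofReal p)] (C : ℝ) (hC : 0 < C)
    (hCR : ∀ f : ℝ → ℝ, MemLp f (ENNReal.ofReal p) (volume.restrict (Set.Icc 0 T)) →
      ∫⁻ u in Set.Icc (0 : ℝ) T, ∫⁻ v in Set.Icc (0 : ℝ) T,
          ENNReal.ofReal |f u * f v * φ u v|
        ≤ ENNReal.ofReal
            (C * ((∫ u in Set.Icc (0 : ℝ) T, |f u| ^ p) ^ (1 / p)) ^ 2))
    (e : HilbertBasis ℕ ℝ U)
    (l : ℕ → ℝ) (hl : ∀ n, 0 ≤ l n) (hsum : Summable (fun n => Real.sqrt (l n)))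
    (Q : U →L[ℝ] U) (hQ : ∀ z : U, HasSum (fun n => (l n * ⟪z, e n⟫) • (e n : U)) (Q z))
    (I : ℕ → (Lp H (ENNReal.ofReal p) (volume.restrict (Set.Icc (0 : ℝ) T)) →ₗ[ℝ] Lp H 2 P))
    (hI1 : ∀ (n m : ℕ)
      (f h : Lp H (ENNReal.ofReal p) (volume.restrict (Set.Icc (0 : ℝ) T))) (x y : H),
      ∫ ω, ⟪(I n f) ω, x⟫ * ⟪(I m h) ω, y⟫ ∂P
        = (if n = m then (1 : ℝ) else 0) *
            ∫ u in Set.Icc (0 : ℝ) T, ∫ v in Set.Icc (0 : ℝ) T,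
              ⟪f u, x⟫ * ⟪h v, y⟫ * φ u v)
    (hI2 : ∀ (n : ℕ)
      (f h : Lp H (ENNReal.ofReal p) (volume.restrict (Set.Icc (0 : ℝ) T))),
      ∫ ω, ⟪(I n f) ω, (I n h) ω⟫ ∂P
        = ∫ u in Set.Icc (0 : ℝ) T, ∫ v in Set.Icc (0 : ℝ) T, ⟪f u, h v⟫ * φ u v)
    (h₁ h₂ : ℝ → (U →L[ℝ] H))
    (hh₁ : MemLp h₁ (ENNReal.ofReal p) (volume.restrict (Set.Icc (0 : ℝ) T)))
    (hh₂ : MemLp h₂ (ENNReal.ofReal p) (volume.restrict (Set.Icc (0 : ℝ) T)))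
    (F₁ F₂ : ℕ → Lp H (ENNReal.ofReal p) (volume.restrict (Set.Icc (0 : ℝ) T)))
    (hF₁ : ∀ n, (F₁ n : ℝ → H) =ᵐ[volume.restrict (Set.Icc (0 : ℝ) T)] fun s => h₁ s (e n))
    (hF₂ : ∀ n, (F₂ n : ℝ → H) =ᵐ[volume.restrict (Set.Icc (0 : ℝ) T)] fun s => h₂ s (e n)) :
    ∃ J₁ J₂ : Lp H 2 P,
      HasSum (fun n => Real.sqrt (l n) • I n (F₁ n)) J₁ ∧
      HasSum (fun n => Real.sqrt (l n) • I n (F₂ n)) J₂ ∧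
      ∀ x y : H,
        ∫ ω, ⟪J₁ ω, x⟫ * ⟪J₂ ω, y⟫ ∂P
          = ∫ u in Set.Icc (0 : ℝ) T, ∫ v in Set.Icc (0 : ℝ) T,
              ⟪h₂ v (Q (ContinuousLinearMap.adjoint (h₁ u) x)), y⟫ * φ u v :=
  stmt_15_general P T φ hφmeas p C hCR e l hl hsum Q hQ I hI1 hI2 h₁ h₂ hh₁ hh₂ F₁ F₂ hF₁ hF₂
end

section
/- Let T > 0, let φ : [0,T]² → ℝ be a measurable symmetric kernel satisfying condition (C_R) with exponent p ∈ (1,∞) and constant C > 0, let (U,⟨·,·⟩_U) and (H,⟨·,·⟩_H) be separable real Hilbert spaces, (e_n) an orthonormal basis of U, and (λ_n) nonnegative reals with ∑_n √λ_n < ∞. For each n let I_n : L^p([0,T];H) → L²(Ω;H) be a linear map satisfying, for all f, h ∈ L^p([0,T];H): E⟨I_n f, I_m h⟩_H = δ_{nm} ∫_0^T ∫_0^T ⟨f(s), h(s')⟩_H φ(s,s') ds ds'. Then for every h_1, h_2 ∈ L^p([0,T];L(U,H)) the series J(h_i) := ∑_n √λ_n I_n(h_i(·)e_n) converges in L²(Ω;H)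 and E⟨J(h_1), J(h_2)⟩_H = ∑_n λ_n ∫_0^T ∫_0^T ⟨h_1(s) e_n, h_2(s') e_n⟩_H φ(s,s') ds ds' (all series converging absolutely). -/
/-!
Every function in sight is bounded pointwise by `g = ‖h₁‖ + ‖h₂‖ ∈ L^p`, and `(C_R)` applied to `g`
bounds every double integral `∫∫ ⟨A u, B v⟩ φ(u,v)` with `‖A‖, ‖B‖ ≤ g` by one finite constant `K`
(`kernelBound` of `g`). Hence `‖I_n(h(·)e_n)‖² ≤ K`, so `∑ √λ_n < ∞` makes both series converge
absolutely, and `|λ_n ∫∫ …| ≤ λ_n K` with `∑ λ_n < ∞` gives the absolute convergence on the right.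
The isometry relations make `I_n(h₁(·)e_n)` and `I_m(h₂(·)e_m)` orthogonal for `n ≠ m`, so the
inner product of the two sums is the sum of the diagonal terms.
-/

open MeasureTheory Set
open scoped RealInnerProductSpace ENNReal

theorem Summable.mul_self_of_nonneg {ι : Type*} {f : ι → ℝ} (hf : Summable f) (hf0 : 0 ≤ f) :
    Summable fun i => f i * f i :=
  (hf.mul_of_nonneg hf hf0 hf0).comp_injective (i := fun i => (i, i))
    fun _ _ h => (Prod.ext_iff.1 h).1

theorem hasSum_inner_of_orthogonal {ι E : Type*} [NormedAddCommGroup E] [InnerProductSpace ℝ E]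
    {x y : ι → E} {a b : ι → ℝ} {X Y : E}
    (hX : HasSum (fun n => a n • x n) X) (hY : HasSum (fun n => b n • y n) Y)
    (horth : ∀ n m, n ≠ m → ⟪x n, y m⟫ = 0) :
    HasSum (fun n => a n * b n * ⟪x n, y n⟫) ⟪X, Y⟫ := by
  have hxY : ∀ n, ⟪x n, Y⟫ = b n * ⟪x n, y n⟫ := fun n => by
    have hdiag := hasSum_single (f := fun m => ⟪x n, b m • y m⟫) n fun m hm => by
      simp only [real_inner_smul_right, horth n m hm.symm, mul_zero]
    simpa only [innerSL_apply_apply, real_inner_smul_right] using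
      (hY.mapL (innerSL ℝ (x n))).unique hdiag
  have hYX := hX.mapL (innerSL ℝ Y)
  simp only [innerSL_apply_apply, real_inner_smul_right,
    fun n => (real_inner_comm Y (x n)).symm.trans (hxY n)] at hYX
  simpa only [← real_inner_comm Y X, mul_assoc] using hYX

theorem Summable.smul_of_norm_le {ι E : Type*} [NormedAddCommGroup E] [NormedSpace ℝ E]
    [CompleteSpace E] {a : ι → ℝ} (ha : Summable a) (ha0 : 0 ≤ a) {x : ι → E} {M : ℝ}
    (hx : ∀ i, ‖x i‖ ≤ M) : Summable fun i => a i • x i :=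
  (ha.mul_right M).of_norm_bounded fun i => by
    rw [norm_smul, Real.norm_of_nonneg (ha0 i)]
    exact mul_le_mul_of_nonneg_left (hx i) (ha0 i)

section KernelForm

variable {α E : Type*} [MeasurableSpace α] (μ : Measure α) [NormedAddCommGroup E]
  [InnerProductSpace ℝ E] (φ : α → α → ℝ)

noncomputable def kernelForm (A B : α → E) : ℝ :=
  ∫ u, ∫ v, ⟪A u, B v⟫ * φ u v ∂μ ∂μ

noncomputable def kernelBound (g : α → ℝ) : ℝ≥0∞ :=
  ∫⁻ u, ∫⁻ v, ENNReal.ofReal |g u * g v * φ u v| ∂μ ∂μ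

variable {μ φ}

theorem kernelForm_congr_ae {A A' B B' : α → E} (hA : A =ᵐ[μ] A') (hB : B =ᵐ[μ] B') :
    kernelForm μ φ A B = kernelForm μ φ A' B' := by
  refine integral_congr_ae ?_
  filter_upwards [hA] with u hu
  refine integral_congr_ae ?_
  filter_upwards [hB] with v hv
  rw [hu, hv]

theorem abs_kernelForm_le {g : α → ℝ} (hg : 0 ≤ g) {A B : α → E} (hA : ∀ᵐ u ∂μ, ‖A u‖ ≤ g u)
    (hB : ∀ᵐ v ∂μ, ‖B v‖ ≤ g v) (hfin : kernelBound μ φ g ≠ ∞) :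
    |kernelForm μ φ A B| ≤ (kernelBound μ φ g).toReal := by
  have hpoint : ∀ u v, ‖A u‖ ≤ g u → ‖B v‖ ≤ g v →
      ‖⟪A u, B v⟫ * φ u v‖ₑ ≤ ENNReal.ofReal |g u * g v * φ u v| := fun u v hu hv => by
    rw [← ofReal_norm, Real.norm_eq_abs, abs_mul, abs_mul, abs_mul, abs_of_nonneg (hg u),
      abs_of_nonneg (hg v)]
    gcongr
    exact (abs_real_inner_le_norm _ _).trans (mul_le_mul hu hv (norm_nonneg _) (hg u))
  rw [← ENNReal.ofReal_le_iff_le_toReal hfin, ← Real.norm_eq_abs, ofReal_norm]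
  calc ‖kernelForm μ φ A B‖ₑ
      ≤ ∫⁻ u, ∫⁻ v, ‖⟪A u, B v⟫ * φ u v‖ₑ ∂μ ∂μ :=
        (enorm_integral_le_lintegral_enorm _).trans
          (lintegral_mono fun _ => enorm_integral_le_lintegral_enorm _)
    _ ≤ kernelBound μ φ g := by
        refine lintegral_mono_ae ?_
        filter_upwards [hA] with u hu
        refine lintegral_mono_ae ?_
        filter_upwards [hB] with v hv
        exact hpoint u v hu hv

end KernelForm

section KernelIsometry

variable {α E Ω : Type*} [MeasurableSpace α] {μ : Measure α} [NormedAddCommGroup E]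
  [InnerProductSpace ℝ E] {φ : α → α → ℝ} [MeasurableSpace Ω] {P : Measure Ω} {q : ℝ≥0∞}
  {I : ℕ → Lp E q μ →ₗ[ℝ] Lp E 2 P}

variable (μ φ P) in
def IsKernelIsometricFamily (I : ℕ → Lp E q μ →ₗ[ℝ] Lp E 2 P) : Prop :=
  ∀ n m (f h : Lp E q μ), ∫ ω, ⟪I n f ω, I m h ω⟫ ∂P
    = (if n = m then (1 : ℝ) else 0) * kernelForm μ φ (f : α → E) h

theorem inner_apply_eq_ite (hI : IsKernelIsometricFamily μ φ P I) (n m : ℕ) (f h : Lp E q μ) :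
    ⟪I n f, I m h⟫ = if n = m then kernelForm μ φ (f : α → E) h else 0 := by
  rw [L2.inner_def, hI]
  split_ifs <;> simp only [one_mul, zero_mul]

theorem norm_apply_le_sqrt_kernelBound (hI : IsKernelIsometricFamily μ φ P I)
    {g : α → ℝ} (hg : 0 ≤ g) (hfin : kernelBound μ φ g ≠ ∞) (n : ℕ) {f : Lp E q μ}
    (hf : ∀ᵐ u ∂μ, ‖f u‖ ≤ g u) :
    ‖I n f‖ ≤ √(kernelBound μ φ g).toReal := by
  have hbound := abs_kernelForm_le hg hf hf hfin
  rw [Real.le_sqrt (norm_nonneg _) ((abs_nonneg _).trans hbound), ← real_inner_self_eq_norm_sq,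
    inner_apply_eq_ite hI, if_pos rfl]
  exact (le_abs_self _).trans hbound

end KernelIsometry

theorem stmt_16_general
    {U : Type*} [NormedAddCommGroup U] [InnerProductSpace ℝ U]
    {H : Type*} [NormedAddCommGroup H] [InnerProductSpace ℝ H] [CompleteSpace H]
    {Ω : Type*} [MeasurableSpace Ω] (P : Measure Ω)
    (T : ℝ) (φ : ℝ → ℝ → ℝ)
    (p : ℝ) [Fact (1 ≤ ENNReal.ofReal p)] (C : ℝ)
    (hCR : ∀ f : ℝ → ℝ, MemLp f (ENNReal.ofReal p) (volume.restrict (Set.Icc 0 T)) →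
      ∫⁻ u in Set.Icc (0 : ℝ) T, ∫⁻ v in Set.Icc (0 : ℝ) T,
          ENNReal.ofReal |f u * f v * φ u v|
        ≤ ENNReal.ofReal
            (C * ((∫ u in Set.Icc (0 : ℝ) T, |f u| ^ p) ^ (1 / p)) ^ 2))
    (e : HilbertBasis ℕ ℝ U)
    (l : ℕ → ℝ) (hl : ∀ n, 0 ≤ l n) (hsum : Summable (fun n => Real.sqrt (l n)))
    (I : ℕ → (Lp H (ENNReal.ofReal p) (volume.restrict (Set.Icc (0 : ℝ) T)) →ₗ[ℝ] Lp H 2 P))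
    (hI : ∀ (n m : ℕ)
      (f h : Lp H (ENNReal.ofReal p) (volume.restrict (Set.Icc (0 : ℝ) T))),
      ∫ ω, ⟪(I n f) ω, (I m h) ω⟫ ∂P
        = (if n = m then (1 : ℝ) else 0) *
            ∫ u in Set.Icc (0 : ℝ) T, ∫ v in Set.Icc (0 : ℝ) T, ⟪f u, h v⟫ * φ u v)
    (h₁ h₂ : ℝ → (U →L[ℝ] H))
    (hh₁ : MemLp h₁ (ENNReal.ofReal p) (volume.restrict (Set.Icc (0 : ℝ) T)))
    (hh₂ : MemLp h₂ (ENNReal.ofReal p) (volume.restrict (Set.Icc (0 : ℝ) T)))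
    (F₁ F₂ : ℕ → Lp H (ENNReal.ofReal p) (volume.restrict (Set.Icc (0 : ℝ) T)))
    (hF₁ : ∀ n, (F₁ n : ℝ → H) =ᵐ[volume.restrict (Set.Icc (0 : ℝ) T)] fun s => h₁ s (e n))
    (hF₂ : ∀ n, (F₂ n : ℝ → H) =ᵐ[volume.restrict (Set.Icc (0 : ℝ) T)] fun s => h₂ s (e n)) :
    ∃ J₁ J₂ : Lp H 2 P,
      HasSum (fun n => Real.sqrt (l n) • I n (F₁ n)) J₁ ∧
      HasSum (fun n => Real.sqrt (l n) • I n (F₂ n)) J₂ ∧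
      Summable (fun n => |l n *
        ∫ u in Set.Icc (0 : ℝ) T, ∫ v in Set.Icc (0 : ℝ) T,
          ⟪h₁ u (e n), h₂ v (e n)⟫ * φ u v|) ∧
      ∫ ω, ⟪J₁ ω, J₂ ω⟫ ∂P
        = ∑' n, l n *
            ∫ u in Set.Icc (0 : ℝ) T, ∫ v in Set.Icc (0 : ℝ) T,
              ⟪h₁ u (e n), h₂ v (e n)⟫ * φ u v := by
  set g : ℝ → ℝ := fun u => ‖h₁ u‖ + ‖h₂ u‖
  have hg : 0 ≤ g := fun u => add_nonneg (norm_nonneg _) (norm_nonneg _)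
  have hfin : kernelBound _ φ g ≠ ∞ :=
    ne_top_of_le_ne_top ENNReal.ofReal_ne_top (hCR g (hh₁.norm.add hh₂.norm))
  have hb₁ : ∀ n u, ‖h₁ u (e n)‖ ≤ g u := fun n u =>
    ((h₁ u).unit_le_opNorm _ (e.orthonormal.1 n).le).trans (le_add_of_nonneg_right (norm_nonneg _))
  have hb₂ : ∀ n u, ‖h₂ u (e n)‖ ≤ g u := fun n u =>
    ((h₂ u).unit_le_opNorm _ (e.orthonormal.1 n).le).trans (le_add_of_nonneg_left (norm_nonneg _))
  have hJ₁ := (hsum.smul_of_norm_le (fun _ => Real.sqrt_nonneg _) fun n =>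
    norm_apply_le_sqrt_kernelBound hI hg hfin n
      (((hF₁ n).fun_comp norm).trans_le (ae_of_all _ (hb₁ n)))).hasSum
  have hJ₂ := (hsum.smul_of_norm_le (fun _ => Real.sqrt_nonneg _) fun n =>
    norm_apply_le_sqrt_kernelBound hI hg hfin n
      (((hF₂ n).fun_comp norm).trans_le (ae_of_all _ (hb₂ n)))).hasSum
  have hdiag : ∀ n, √(l n) * √(l n) * ⟪I n (F₁ n), I n (F₂ n)⟫
      = l n * kernelForm _ φ (fun u => h₁ u (e n)) fun v => h₂ v (e n) := fun n => by
    rw [Real.mul_self_sqrt (hl n), inner_apply_eq_ite hI, if_pos rfl,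
      kernelForm_congr_ae (hF₁ n) (hF₂ n)]
  have hJ := hasSum_inner_of_orthogonal hJ₁ hJ₂ fun n m hnm => by
    rw [inner_apply_eq_ite hI, if_neg hnm]
  simp only [hdiag] at hJ
  have hterm : ∀ n, |l n * kernelForm (volume.restrict (Icc 0 T)) φ (fun u => h₁ u (e n))
      fun v => h₂ v (e n)| ≤ l n * (kernelBound (volume.restrict (Icc 0 T)) φ g).toReal := by
    intro n
    rw [abs_mul, abs_of_nonneg (hl n)]
    exact mul_le_mul_of_nonneg_left
      (abs_kernelForm_le hg (ae_of_all _ (hb₁ n)) (ae_of_all _ (hb₂ n)) hfin) (hl n)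
  have hl_summable : Summable l := by
    simpa only [Real.mul_self_sqrt (hl _)] using hsum.mul_self_of_nonneg fun _ => Real.sqrt_nonneg _
  refine ⟨_, _, hJ₁, hJ₂,
    (hl_summable.mul_right _).of_nonneg_of_le (fun _ => abs_nonneg _) hterm, ?_⟩
  rw [← L2.inner_def]
  exact hJ.tsum_eq.symm

/-- Given component integrals `I_n : L^p([0,T];H) → L²(Ω;H)` with
`E⟨I_n f, I_m h⟩ = δ_{nm} ∫∫ ⟨f(s),h(s')⟩ φ(s,s') ds ds'` for a kernel `φ` satisfying
`(C_R)`, and weights `λ_n ≥ 0` with `∑ √λ_n < ∞`, for `h₁, h₂ ∈ L^p([0,T];L(U,H))` the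
series `J(h_i) = ∑_n √λ_n I_n(h_i(·)e_n)` converge in `L²(Ω;H)` and
`E⟨J(h₁), J(h₂)⟩ = ∑_n λ_n ∫_0^T ∫_0^T ⟨h₁(s)e_n, h₂(s')e_n⟩ φ(s,s') ds ds'`,
with absolute convergence of the series on the right. -/
theorem stmt_16
    {U : Type*} [NormedAddCommGroup U] [InnerProductSpace ℝ U] [CompleteSpace U]
    [SecondCountableTopology U]
    {H : Type*} [NormedAddCommGroup H] [InnerProductSpace ℝ H] [CompleteSpace H]
    [SecondCountableTopology H]
    {Ω : Type*} [MeasurableSpace Ω] (P : Measure Ω) [IsProbabilityMeasure P]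
    (T : ℝ) (hT : 0 < T) (φ : ℝ → ℝ → ℝ) (hφmeas : Measurable (Function.uncurry φ))
    (hφsymm : ∀ u v, φ u v = φ v u)
    (p : ℝ) (hp : 1 < p) [Fact (1 ≤ ENNReal.ofReal p)] (C : ℝ) (hC : 0 < C)
    (hCR : ∀ f : ℝ → ℝ, MemLp f (ENNReal.ofReal p) (volume.restrict (Set.Icc 0 T)) →
      ∫⁻ u in Set.Icc (0 : ℝ) T, ∫⁻ v in Set.Icc (0 : ℝ) T,
          ENNReal.ofReal |f u * f v * φ u v|
        ≤ ENNReal.ofReal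
            (C * ((∫ u in Set.Icc (0 : ℝ) T, |f u| ^ p) ^ (1 / p)) ^ 2))
    (e : HilbertBasis ℕ ℝ U)
    (l : ℕ → ℝ) (hl : ∀ n, 0 ≤ l n) (hsum : Summable (fun n => Real.sqrt (l n)))
    (I : ℕ → (Lp H (ENNReal.ofReal p) (volume.restrict (Set.Icc (0 : ℝ) T)) →ₗ[ℝ] Lp H 2 P))
    (hI : ∀ (n m : ℕ)
      (f h : Lp H (ENNReal.ofReal p) (volume.restrict (Set.Icc (0 : ℝ) T))),
      ∫ ω, ⟪(I n f) ω, (I m h) ω⟫ ∂P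
        = (if n = m then (1 : ℝ) else 0) *
            ∫ u in Set.Icc (0 : ℝ) T, ∫ v in Set.Icc (0 : ℝ) T, ⟪f u, h v⟫ * φ u v)
    (h₁ h₂ : ℝ → (U →L[ℝ] H))
    (hh₁ : MemLp h₁ (ENNReal.ofReal p) (volume.restrict (Set.Icc (0 : ℝ) T)))
    (hh₂ : MemLp h₂ (ENNReal.ofReal p) (volume.restrict (Set.Icc (0 : ℝ) T)))
    (F₁ F₂ : ℕ → Lp H (ENNReal.ofReal p) (volume.restrict (Set.Icc (0 : ℝ) T)))
    (hF₁ : ∀ n, (F₁ n : ℝ → H) =ᵐ[volume.restrict (Set.Icc (0 : ℝ) T)] fun s => h₁ s (e n))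
    (hF₂ : ∀ n, (F₂ n : ℝ → H) =ᵐ[volume.restrict (Set.Icc (0 : ℝ) T)] fun s => h₂ s (e n)) :
    ∃ J₁ J₂ : Lp H 2 P,
      HasSum (fun n => Real.sqrt (l n) • I n (F₁ n)) J₁ ∧
      HasSum (fun n => Real.sqrt (l n) • I n (F₂ n)) J₂ ∧
      Summable (fun n => |l n *
        ∫ u in Set.Icc (0 : ℝ) T, ∫ v in Set.Icc (0 : ℝ) T,
          ⟪h₁ u (e n), h₂ v (e n)⟫ * φ u v|) ∧
      ∫ ω, ⟪J₁ ω, J₂ ω⟫ ∂P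
        = ∑' n, l n *
            ∫ u in Set.Icc (0 : ℝ) T, ∫ v in Set.Icc (0 : ℝ) T,
              ⟪h₁ u (e n), h₂ v (e n)⟫ * φ u v :=
  stmt_16_general P T φ p C hCR e l hl hsum I hI h₁ h₂ hh₁ hh₂ F₁ F₂ hF₁ hF₂
end

section
/- Let V be a real normed vector space with dual V^* and dual pairing ⟨·,·⟩, let H be a real Hilbert space and ι : V → H a continuous linear map (write ‖v‖_H := ‖ι v‖_H), and let K be a real normed space. Let α ∈ (1,∞), c_1 ∈ ℝ, c_2 ∈ (0,∞), c_3 ∈ [0,∞), f_0 ≥ 0, g_0 ≥ 0, and let A : V → V^* and B : V → K satisfy: (coercivity) 2⟨A(v), v⟩ + ‖B(v)‖_K² ≤ c_1 ‖v‖_H² − c_2 ‖v‖_V^α + f_0 for all v ∈ V; (boundedness) ‖A(v)‖_{V^*} ≤ g_0 + c_3 ‖v‖_V^{α−1} for all v ∈ V. Then for every w ∈ V there exist c_1' ∈ ℝ, c_2' ∈ (0,∞) and f' ≥ 0 such that for all v ∈ V: 2⟨A(v+w), v⟩ + ‖B(v+w)‖_K² ≤ c_1' ‖v‖_H² − c_2'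 ‖v‖_V^α + f'. In other words, the shifted coefficients Ā(v) := A(v+w), B̄(v) := B(v+w) again satisfy the coercivity condition (H3), with constants depending only on c_1, c_2, c_3, f_0, g_0, α and w. -/
/-!
Put `u = v + w`. Since `v = u - w`, the pairing `⟨A u, v⟩` differs from `⟨A u, u⟩` by at most
`‖A u‖ ‖w‖ ≤ (g₀ + c₃ ‖u‖^(α-1)) ‖w‖`, so coercivity at `u` bounds the left-hand side by
`c₁ ‖u‖_H² - c₂ ‖u‖^α + 2 c₃ ‖w‖ ‖u‖^(α-1) + const`. As `α - 1 < α`, the growth term is absorbed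
by half of `c₂ ‖u‖^α` (a Young-type inequality). Finally `‖u‖_H² ≤ 2 ‖v‖_H² + 2 ‖w‖_H²` and
`2^(1-α) ‖v‖^α ≤ ‖u‖^α + ‖w‖^α` convert the bound in `u` into one in `v`.
-/

namespace Real

theorem rpow_add_le_mul_rpow_add_rpow {a b p : ℝ} (ha : 0 ≤ a) (hb : 0 ≤ b) (hp : 1 ≤ p) :
    (a + b) ^ p ≤ 2 ^ (p - 1) * (a ^ p + b ^ p) := by
  lift a to NNReal using ha
  lift b to NNReal using hb
  exact_mod_cast NNReal.rpow_add_le_mul_rpow_add_rpow a b hp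

/-- For `t ≤ a / ε` bound `t ^ (p - 1)` by `(a / ε) ^ (p - 1)`; otherwise `a < ε t`. -/
theorem mul_rpow_sub_one_le_mul_rpow_add {a ε p t : ℝ} (ha : 0 ≤ a) (hε : 0 < ε) (hp : 1 < p)
    (ht : 0 ≤ t) : a * t ^ (p - 1) ≤ ε * t ^ p + a * (a / ε) ^ (p - 1) := by
  have hεtp : 0 ≤ ε * t ^ p := by positivity
  rcases le_or_gt t (a / ε) with hsmall | hlarge
  · have := Real.rpow_le_rpow ht hsmall (by linarith : 0 ≤ p - 1)
    nlinarith [mul_le_mul_of_nonneg_left this ha]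
  · have hat : a ≤ ε * t := by rw [div_lt_iff₀ hε] at hlarge; linarith
    have htp : t ^ p = t * t ^ (p - 1) := by
      rw [← Real.rpow_one_add' ht (by linarith)]; ring_nf
    have : a * t ^ (p - 1) ≤ ε * t ^ p := by
      rw [htp, ← mul_assoc]; exact mul_le_mul_of_nonneg_right hat (by positivity)
    have : 0 ≤ a * (a / ε) ^ (p - 1) := by positivity
    linarith

end Real

section Norms

variable {E : Type*} [SeminormedAddCommGroup E]

theorem sq_norm_add_le (x y : E) : ‖x + y‖ ^ 2 ≤ 2 * ‖x‖ ^ 2 + 2 * ‖y‖ ^ 2 := by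
  have := pow_le_pow_left₀ (norm_nonneg _) (norm_add_le x y) 2
  linarith [add_sq_le (a := ‖x‖) (b := ‖y‖)]

theorem two_rpow_one_sub_mul_rpow_norm_le {p : ℝ} (hp : 1 ≤ p) (x y : E) :
    2 ^ (1 - p) * ‖x‖ ^ p ≤ ‖x + y‖ ^ p + ‖y‖ ^ p := by
  have hx : ‖x‖ ^ p ≤ 2 ^ (p - 1) * (‖x + y‖ ^ p + ‖y‖ ^ p) :=
    (Real.rpow_le_rpow (norm_nonneg x) (norm_le_add_norm_add x y) (by linarith)).trans
      (Real.rpow_add_le_mul_rpow_add_rpow (norm_nonneg _) (norm_nonneg _) hp)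
  have htwo : (2 : ℝ) ^ (1 - p) * 2 ^ (p - 1) = 1 := by
    rw [← Real.rpow_add two_pos]; norm_num
  calc 2 ^ (1 - p) * ‖x‖ ^ p ≤ 2 ^ (1 - p) * (2 ^ (p - 1) * (‖x + y‖ ^ p + ‖y‖ ^ p)) := by
        gcongr
    _ = ‖x + y‖ ^ p + ‖y‖ ^ p := by rw [← mul_assoc, htwo, one_mul]

end Norms

theorem ContinuousLinearMap.apply_sub_le {V : Type*} [SeminormedAddCommGroup V] [NormedSpace ℝ V]
    (ℓ : V →L[ℝ] ℝ) (u w : V) : ℓ (u - w) ≤ ℓ u + ‖ℓ‖ * ‖w‖ := by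
  rw [map_sub]
  linarith [neg_abs_le (ℓ w), ℓ.le_opNorm w, Real.norm_eq_abs (ℓ w)]

theorem stmt_17_general
    {V : Type*} [NormedAddCommGroup V] [NormedSpace ℝ V]
    {H : Type*} [NormedAddCommGroup H] [InnerProductSpace ℝ H]
    {K : Type*} [NormedAddCommGroup K]
    (ι : V →L[ℝ] H)
    (α : ℝ) (hα : 1 < α) (c₁ : ℝ) (c₂ : ℝ) (hc₂ : 0 < c₂) (c₃ : ℝ) (hc₃ : 0 ≤ c₃)
    (f₀ : ℝ) (hf₀ : 0 ≤ f₀) (g₀ : ℝ) (hg₀ : 0 ≤ g₀)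
    (A : V → (V →L[ℝ] ℝ)) (B : V → K)
    (hcoerc : ∀ v : V, 2 * A v v + ‖B v‖ ^ 2 ≤ c₁ * ‖ι v‖ ^ 2 - c₂ * ‖v‖ ^ α + f₀)
    (hbound : ∀ v : V, ‖A v‖ ≤ g₀ + c₃ * ‖v‖ ^ (α - 1))
    (w : V) :
    ∃ (c₁' : ℝ) (c₂' : ℝ) (f' : ℝ), 0 < c₂' ∧ 0 ≤ f' ∧
      ∀ v : V, 2 * A (v + w) v + ‖B (v + w)‖ ^ 2
        ≤ c₁' * ‖ι v‖ ^ 2 - c₂' * ‖v‖ ^ α + f' := by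
  set a := 2 * c₃ * ‖w‖
  set young := a * (a / (c₂ / 2)) ^ (α - 1)
  refine ⟨2 * |c₁|, c₂ / 2 * 2 ^ (1 - α),
    f₀ + 2 * g₀ * ‖w‖ + young + 2 * |c₁| * ‖ι w‖ ^ 2 + c₂ / 2 * ‖w‖ ^ α,
    by positivity, by positivity, fun v => ?_⟩
  set u := v + w
  have hpair : A u v ≤ A u u + ‖A u‖ * ‖w‖ := by
    simpa [u] using (A u).apply_sub_le u w
  have hgrowth := mul_le_mul_of_nonneg_right (hbound u) (norm_nonneg w)
  have habsorb : a * ‖u‖ ^ (α - 1) ≤ c₂ / 2 * ‖u‖ ^ α + young :=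
    Real.mul_rpow_sub_one_le_mul_rpow_add (by positivity) (by positivity) hα (norm_nonneg u)
  have hH : c₁ * ‖ι u‖ ^ 2 ≤ 2 * |c₁| * ‖ι v‖ ^ 2 + 2 * |c₁| * ‖ι w‖ ^ 2 := by
    have := sq_norm_add_le (ι v) (ι w)
    rw [← map_add] at this
    nlinarith [le_abs_self c₁, abs_nonneg c₁, sq_nonneg ‖ι u‖]
  have hV := mul_le_mul_of_nonneg_left (two_rpow_one_sub_mul_rpow_norm_le hα.le v w)
    (by positivity : 0 ≤ c₂ / 2)
  linarith [hcoerc u]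

/-- Shift invariance of the coercivity condition (H3): if
`A : V → V^*` and `B : V → K` satisfy
`2⟨A(v),v⟩ + ‖B(v)‖² ≤ c₁‖v‖_H² - c₂‖v‖_V^α + f₀` (coercivity) and
`‖A(v)‖_{V^*} ≤ g₀ + c₃‖v‖_V^{α-1}` (boundedness), then for every `w ∈ V` the shifted
coefficients `Ā(v) = A(v+w)`, `B̄(v) = B(v+w)` satisfy a coercivity condition of the
same form with new constants `c₁' ∈ ℝ`, `c₂' ∈ (0,∞)`, `f' ≥ 0`. -/
theorem stmt_17
    {V : Type*} [NormedAddCommGroup V] [NormedSpace ℝ V]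
    {H : Type*} [NormedAddCommGroup H] [InnerProductSpace ℝ H] [CompleteSpace H]
    {K : Type*} [NormedAddCommGroup K] [NormedSpace ℝ K]
    (ι : V →L[ℝ] H)
    (α : ℝ) (hα : 1 < α) (c₁ : ℝ) (c₂ : ℝ) (hc₂ : 0 < c₂) (c₃ : ℝ) (hc₃ : 0 ≤ c₃)
    (f₀ : ℝ) (hf₀ : 0 ≤ f₀) (g₀ : ℝ) (hg₀ : 0 ≤ g₀)
    (A : V → (V →L[ℝ] ℝ)) (B : V → K)
    (hcoerc : ∀ v : V, 2 * A v v + ‖B v‖ ^ 2 ≤ c₁ * ‖ι v‖ ^ 2 - c₂ * ‖v‖ ^ α + f₀)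
    (hbound : ∀ v : V, ‖A v‖ ≤ g₀ + c₃ * ‖v‖ ^ (α - 1))
    (w : V) :
    ∃ (c₁' : ℝ) (c₂' : ℝ) (f' : ℝ), 0 < c₂' ∧ 0 ≤ f' ∧
      ∀ v : V, 2 * A (v + w) v + ‖B (v + w)‖ ^ 2
        ≤ c₁' * ‖ι v‖ ^ 2 - c₂' * ‖v‖ ^ α + f' :=
  stmt_17_general ι α hα c₁ c₂ hc₂ c₃ hc₃ f₀ hf₀ g₀ hg₀ A B hcoerc hbound w
end
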